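/- There is an absolute constant A₁ such that for every real s > 0 and every integer n with p := n − s ≥ 0 the following hold: if p < s then −ΔG_n(s) ≤ A₁·s^{−3/2}·p·exp(−p²/(4s)); and if p > s then −ΔG_n(s) ≤ A₁·p^{−1/2}·e^{−p/4}. -/

import Mathlib

/-!
Since `n G_{n-1}(s) = s G_n(s)`, we have `-ΔG_n(s) = (p/s) G_n(s)`, and Stirling's bound
`n! ≥ √n (n/e)ⁿ` gives `G_n(s) ≤ (s/n)ⁿ eᵖ / √n`.
If `p < s`, then `log (1 - x) ≤ -x - x²/2` at `x = p/n` turns this into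
`e^{-p²/(2n)} / √n ≤ e^{-p²/(4s)} / √s`.
If `p > s`, then `r = s/n ≤ 1/2`, and `r e^{5(1-r)/4} ≤ 1` gives
`(s/n)ⁿ eᵖ ≤ r e^{5/4} e^{-p/4}`; finally `(p/s) · r / √n = p / n^{3/2} ≤ p^{-1/2}`.
-/

open Real

/-- The Poisson weights `G_n(t) = tⁿ e^{-t}/n!` for `n ≥ 0`, and `0` for `n < 0`. -/
noncomputable def PoissonG (n : ℤ) (t : ℝ) : ℝ :=
  if 0 ≤ n then t ^ n.toNat * Real.exp (-t) / (n.toNat.factorial : ℝ) else 0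

lemma PoissonG_natCast (N : ℕ) (t : ℝ) : PoissonG N t = t ^ N * exp (-t) / N.factorial := by
  simp [PoissonG]

lemma neg_sub_PoissonG_sub_one (n : ℤ) {t : ℝ} (ht : t ≠ 0) :
    -(PoissonG n t - PoissonG (n - 1) t) = (n / t - 1) * PoissonG n t := by
  rcases lt_or_ge n 0 with hn | hn
  · rw [PoissonG, PoissonG, if_neg (by omega), if_neg (by omega)]
    simp
  lift n to ℕ using hn
  cases n with
  | zero => simp [PoissonG]
  | succ N =>
    rw [show ((N + 1 : ℕ) : ℤ) - 1 = N by push_cast; ring, PoissonG_natCast, PoissonG_natCast,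
      Nat.factorial_succ]
    push_cast
    field_simp
    ring

lemma sqrt_mul_div_exp_pow_le_factorial (N : ℕ) : √N * (N / exp 1) ^ N ≤ N.factorial := by
  refine le_trans ?_ (Stirling.le_factorial_stirling N)
  gcongr
  nlinarith [pi_gt_three, N.cast_nonneg (α := ℝ)]

lemma PoissonG_natCast_le {N : ℕ} (hN : N ≠ 0) {t : ℝ} (ht : 0 ≤ t) :
    PoissonG N t ≤ (t / N) ^ N * exp (N - t) / √N := by
  have hN' : (0 : ℝ) < N := by positivity
  rw [PoissonG_natCast, div_le_div_iff₀ (by positivity) (by positivity)]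
  calc t ^ N * exp (-t) * √N = (t / N) ^ N * exp (N - t) * (√N * (N / exp 1) ^ N) := by
        rw [div_pow, div_pow, sub_eq_add_neg, exp_add, ← exp_nat_mul, mul_one]
        field_simp
    _ ≤ (t / N) ^ N * exp (N - t) * N.factorial := by
        gcongr
        exact sqrt_mul_div_exp_pow_le_factorial N

lemma add_sq_div_two_le_neg_log_one_sub {x : ℝ} (h0 : 0 ≤ x) (h1 : x < 1) :
    x + x ^ 2 / 2 ≤ -log (1 - x) := by
  have := sum_le_hasSum (Finset.range 2) (fun n _ => by positivity)
    (hasSum_pow_div_log_of_abs_lt_one (abs_lt.2 ⟨by linarith, h1⟩))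
  norm_num [Finset.sum_range_succ] at this
  linarith

lemma one_sub_pow_le_exp (N : ℕ) {x : ℝ} (h0 : 0 ≤ x) (h1 : x < 1) :
    (1 - x) ^ N ≤ exp (-(N * (x + x ^ 2 / 2))) := by
  rw [← exp_log (by linarith : 0 < 1 - x), ← exp_nat_mul]
  gcongr
  rw [← mul_neg]
  exact mul_le_mul_of_nonneg_left (le_neg.mp (add_sq_div_two_le_neg_log_one_sub h0 h1))
    N.cast_nonneg

lemma mul_exp_five_quarters_le_one {r : ℝ} (h0 : 0 < r) (h1 : r ≤ 1 / 2) :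
    r * exp (5 / 4 * (1 - r)) ≤ 1 := by
  have hlog2 : (0.6931471803 : ℝ) < log 2 := log_two_gt_d9
  have hlog : log (2 * r) ≤ 2 * r - 1 := log_le_sub_one_of_pos (by linarith)
  rw [log_mul two_ne_zero h0.ne'] at hlog
  calc r * exp (5 / 4 * (1 - r)) = exp (log r + 5 / 4 * (1 - r)) := by rw [exp_add, exp_log h0]
    _ ≤ 1 := exp_le_one_iff.mpr (by nlinarith)

lemma mul_PoissonG_le_of_lt {s p : ℝ} {N : ℕ} (hs : 0 < s) (hp : 0 ≤ p) (hps : p < s)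
    (hN : (N : ℝ) = s + p) :
    p / s * PoissonG N s ≤ s ^ (-(3 / 2) : ℝ) * p * exp (-p ^ 2 / (4 * s)) := by
  have hNpos : (0 : ℝ) < N := by linarith
  have hG : PoissonG N s ≤ exp (-p ^ 2 / (4 * s)) / √s := calc
    PoissonG N s ≤ (s / N) ^ N * exp (N - s) / √N :=
        PoissonG_natCast_le (Nat.cast_pos.mp hNpos).ne' hs.le
    _ = (1 - p / N) ^ N * exp p / √N := by
        rw [show s / N = 1 - p / N by field_simp; linarith, show (N : ℝ) - s = p by linarith]
    _ ≤ exp (-(N * (p / N + (p / N) ^ 2 / 2))) * exp p / √N := by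
        gcongr
        exact one_sub_pow_le_exp N (by positivity) ((div_lt_one hNpos).mpr (by linarith))
    _ = exp (-(p ^ 2 / (2 * N))) / √N := by
        rw [← exp_add]
        field_simp
        ring_nf
    _ ≤ exp (-p ^ 2 / (4 * s)) / √s := by
        gcongr
        · rw [neg_div, neg_le_neg_iff]
          exact div_le_div_of_nonneg_left (sq_nonneg p) (by positivity) (by linarith)
        · linarith
  have hs32 : s ^ (-(3 / 2) : ℝ) = (s * √s)⁻¹ := by
    rw [rpow_neg hs.le, show (3 / 2 : ℝ) = 1 + 1 / 2 by norm_num, rpow_add hs, rpow_one,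
      sqrt_eq_rpow]
  calc p / s * PoissonG N s ≤ p / s * (exp (-p ^ 2 / (4 * s)) / √s) := by gcongr
    _ = s ^ (-(3 / 2) : ℝ) * p * exp (-p ^ 2 / (4 * s)) := by
        rw [hs32]
        field_simp

lemma mul_PoissonG_le_of_gt {s p : ℝ} {N : ℕ} (hs : 0 < s) (hps : s < p)
    (hN : (N : ℝ) = s + p) :
    p / s * PoissonG N s ≤ exp (5 / 4) * p ^ (-(1 / 2) : ℝ) * exp (-p / 4) := by
  have hp : 0 < p := hs.trans hps
  have hNpos : (0 : ℝ) < N := by linarith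
  have hN0 : N ≠ 0 := (Nat.cast_pos.mp hNpos).ne'
  set r := s / N with hr
  have hr0 : 0 < r := by positivity
  have hr1 : r ≤ 1 / 2 := by rw [hr, div_le_iff₀ hNpos]; linarith
  have hG : PoissonG N s ≤ r * exp (5 / 4) * exp (-p / 4) / √N := calc
    PoissonG N s ≤ r ^ N * exp (N - s) / √N := PoissonG_natCast_le hN0 hs.le
    _ = (r * exp (5 / 4 * (1 - r))) ^ N * exp (-p / 4) / √N := by
        rw [mul_pow, ← exp_nat_mul, mul_assoc, ← exp_add, hr]
        field_simp
        rw [hN]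
        ring_nf
    _ ≤ r * exp (5 / 4 * (1 - r)) * exp (-p / 4) / √N := by
        gcongr
        exact pow_le_of_le_one (by positivity) (mul_exp_five_quarters_le_one hr0 hr1) hN0
    _ ≤ r * exp (5 / 4) * exp (-p / 4) / √N := by
        gcongr
        linarith
  have hsqrt : p / (N * √N) ≤ (√p)⁻¹ := by
    rw [inv_eq_one_div, div_le_div_iff₀ (by positivity) (by positivity)]
    have : p * √p ≤ N * √N := by gcongr <;> linarith
    nlinarith [sq_sqrt hp.le]
  calc p / s * PoissonG N s ≤ p / s * (r * exp (5 / 4) * exp (-p / 4) / √N) := by gcongr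
    _ = p / (N * √N) * (exp (5 / 4) * exp (-p / 4)) := by
        rw [hr]
        field_simp
    _ ≤ (√p)⁻¹ * (exp (5 / 4) * exp (-p / 4)) := by gcongr
    _ = exp (5 / 4) * p ^ (-(1 / 2) : ℝ) * exp (-p / 4) := by
        rw [rpow_neg hp.le, sqrt_eq_rpow]
        ring

/-- Lemma 6 ii): for `s > 0` and `p = n - s ≥ 0`:
`-ΔG_n(s) ≤ A₁ s^{-3/2} p exp(-p²/(4s))` if `p < s`, and
`-ΔG_n(s) ≤ A₁ p^{-1/2} e^{-p/4}` if `p > s`. -/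
theorem stmt_14 :
    ∃ A₁ : ℝ, 0 < A₁ ∧
    ∀ s : ℝ, 0 < s → ∀ n : ℤ,
    ∀ p : ℝ, p = (n:ℝ) - s → 0 ≤ p →
      (p < s → -(PoissonG n s - PoissonG (n-1) s)
          ≤ A₁ * s ^ (-(3/2) : ℝ) * p * Real.exp (-p^2/(4*s))) ∧
      (p > s → -(PoissonG n s - PoissonG (n-1) s)
          ≤ A₁ * p ^ (-(1/2) : ℝ) * Real.exp (-p/4)) := by
  refine ⟨exp (5 / 4), exp_pos _, fun s hs n p hp hp0 => ?_⟩
  lift n to ℕ using (by exact_mod_cast (show (0 : ℝ) ≤ n by linarith))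
  have hN : (n : ℝ) = s + p := by push_cast at hp; linarith
  rw [neg_sub_PoissonG_sub_one _ hs.ne', Int.cast_natCast,
    show (n : ℝ) / s - 1 = p / s by field_simp; linarith]
  refine ⟨fun hps => ?_, fun hps => mul_PoissonG_le_of_gt hs hps hN⟩
  calc p / s * PoissonG n s ≤ s ^ (-(3 / 2) : ℝ) * p * exp (-p ^ 2 / (4 * s)) :=
        mul_PoissonG_le_of_lt hs hp0 hps hN
    _ ≤ exp (5 / 4) * s ^ (-(3 / 2) : ℝ) * p * exp (-p ^ 2 / (4 * s)) := by
        rw [mul_assoc (exp _), mul_assoc (exp _)]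
        exact le_mul_of_one_le_left (by positivity) (one_le_exp (by norm_num))
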